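/- arXiv:2005.00224 — 2 statements merged into one kernel-verified Lean document; each statement's English description precedes it below -/
import Mathlib

section
/- Let $G > 0$ and $\bar\kappa > 0$, $c > 0$, $L > 0$. Let $(\bar G_t)_{t \geq 1}$ satisfy $0 \leq \bar G_t^2 \leq G^2$, define $w_t = \max\{2G^2,\ \bar\kappa^3 L^3 - \sum_{i=1}^t \bar G_i^2,\ \bar\kappa^3 c^3/L^3\}$ and $\eta_t = \bar\kappa/(w_t + \sum_{i=1}^t \bar G_i^2)^{1/3}$. If additionally $\eta_t \leq 1/L$, then $\eta_t^{-1} - \eta_{t-1}^{-1} \leq \frac{2^{2/3} G^2}{3 L \bar\kappa^3}\, \eta_t$ for all $t \geq 1$. -/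
lemma rpow_third_cube (x : ℝ) (hx : 0 ≤ x) : (x ^ ((1:ℝ)/3)) ^ 3 = x := by
  rw [← Real.rpow_natCast (x ^ ((1:ℝ)/3)) 3, ← Real.rpow_mul hx]; norm_num

lemma cube_root_sub (x y : ℝ) (hx : 0 < x) (hy : 0 ≤ y) :
    (x + y) ^ ((1:ℝ)/3) - x ^ ((1:ℝ)/3) ≤ y / (3 * (x ^ ((1:ℝ)/3)) ^ 2) := by
  set a := (x+y)^((1:ℝ)/3) with ha
  set b := x^((1:ℝ)/3) with hbdef
  have hb : 0 < b := Real.rpow_pos_of_pos hx _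
  have hab : b ≤ a := Real.rpow_le_rpow hx.le (by linarith) (by norm_num)
  have ha3 : a^3 = x + y := rpow_third_cube _ (by linarith)
  have hb3 : b^3 = x := rpow_third_cube _ hx.le
  rw [le_div_iff₀ (by positivity)]
  nlinarith [mul_nonneg (sq_nonneg (a - b)) (by linarith : (0:ℝ) ≤ a + 2*b)]

set_option maxHeartbeats 800000 in
theorem stmt_10 (G κ c L : ℝ) (hG : 0 < G) (hκ : 0 < κ) (hc : 0 < c) (hL : 0 < L)
    (Gb : ℕ → ℝ) (hGb : ∀ t, 0 ≤ Gb t ^ 2 ∧ Gb t ^ 2 ≤ G ^ 2)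
    (w η : ℕ → ℝ)
    (hw : ∀ t, w t = max (2 * G ^ 2)
      (max (κ ^ 3 * L ^ 3 - ∑ i ∈ Finset.Icc 1 t, Gb i ^ 2) (κ ^ 3 * c ^ 3 / L ^ 3)))
    (hη : ∀ t, η t = κ / (w t + ∑ i ∈ Finset.Icc 1 t, Gb i ^ 2) ^ ((1 : ℝ) / 3))
    (hηL : ∀ t, η t ≤ 1 / L) :
    ∀ t, 1 ≤ t → (η t)⁻¹ - (η (t - 1))⁻¹ ≤ (2 : ℝ) ^ ((2 : ℝ) / 3) * G ^ 2 / (3 * L * κ ^ 3) * η t := by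
  intro t ht
  obtain ⟨n, rfl⟩ : ∃ n, t = n + 1 := ⟨t - 1, (Nat.succ_pred_eq_of_pos ht).symm⟩
  simp only [Nat.add_sub_cancel]
  have hSnonneg : ∀ m, 0 ≤ ∑ i ∈ Finset.Icc 1 m, Gb i ^ 2 := fun m =>
    Finset.sum_nonneg fun i _ => (hGb i).1
  have hy0 : 0 ≤ Gb (n+1) ^ 2 := (hGb (n+1)).1
  have hyG : Gb (n+1) ^ 2 ≤ G ^ 2 := (hGb (n+1)).2
  have hSsucc : ∑ i ∈ Finset.Icc 1 (n+1), Gb i ^ 2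
      = (∑ i ∈ Finset.Icc 1 n, Gb i ^ 2) + Gb (n+1) ^ 2 :=
    Finset.sum_Icc_succ_top (by omega) _
  have hwmono : w (n+1) ≤ w n := by
    rw [hw, hw, hSsucc]
    exact max_le_max le_rfl (max_le_max (by linarith) le_rfl)
  have hw2G : ∀ m, 2 * G ^ 2 ≤ w m := fun m => (hw m) ▸ le_max_left _ _
  rw [hη, hη]
  set A := w (n+1) + ∑ i ∈ Finset.Icc 1 (n+1), Gb i ^ 2 with hAdef
  set x := w n + ∑ i ∈ Finset.Icc 1 n, Gb i ^ 2 with hxdef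
  have hxpos : 0 < x := by
    have h1 := hw2G n; have h2 := hSnonneg n; rw [hxdef]; nlinarith
  have hApos : 0 < A := by
    have h1 := hw2G (n+1); have h2 := hSnonneg (n+1); rw [hAdef]; nlinarith
  have hAxy : A ≤ x + Gb (n+1) ^ 2 := by rw [hAdef, hxdef, hSsucc]; linarith
  have hG2x : G ^ 2 ≤ x := by
    have h1 := hw2G n; have h2 := hSnonneg n; rw [hxdef]; nlinarith
  set a := A ^ ((1:ℝ)/3) with ha
  set b := x ^ ((1:ℝ)/3) with hb
  have hapos : 0 < a := Real.rpow_pos_of_pos hApos _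
  have hbpos : 0 < b := Real.rpow_pos_of_pos hxpos _
  have ha3 : a ^ 3 = A := rpow_third_cube _ hApos.le
  have hb3 : b ^ 3 = x := rpow_third_cube _ hxpos.le
  have hdiff : a - b ≤ G ^ 2 / (3 * b ^ 2) := by
    have h1 : a ≤ (x + Gb (n+1) ^ 2) ^ ((1:ℝ)/3) :=
      Real.rpow_le_rpow hApos.le hAxy (by norm_num)
    have h2 := cube_root_sub x (Gb (n+1) ^ 2) hxpos hy0
    have h3 : Gb (n+1) ^ 2 / (3 * b ^ 2) ≤ G ^ 2 / (3 * b ^ 2) :=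
      div_le_div_of_nonneg_right hyG (by positivity) |>.trans_eq rfl
    calc a - b ≤ (x + Gb (n+1) ^ 2) ^ ((1:ℝ)/3) - b := by linarith
      _ ≤ Gb (n+1) ^ 2 / (3 * b ^ 2) := h2
      _ ≤ G ^ 2 / (3 * b ^ 2) := h3
  have hLκ : L * κ ≤ a := by
    have h := hηL (n+1)
    rw [hη] at h
    rw [div_le_div_iff₀ (by positivity) hL] at h
    linarith
  set c2 := (2:ℝ) ^ ((2:ℝ)/3) with hc2
  have hc2pos : 0 < c2 := Real.rpow_pos_of_pos two_pos _
  have hc23 : c2 ^ 3 = 4 := by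
    rw [hc2, ← Real.rpow_natCast ((2:ℝ) ^ ((2:ℝ)/3)) 3, ← Real.rpow_mul (by norm_num)]
    norm_num
  have hab2 : a ^ 2 ≤ c2 * b ^ 2 := by
    have hA3 : a ^ 3 ≤ 2 * b ^ 3 := by rw [ha3, hb3]; rw [hxdef]; nlinarith
    have h6 : (a ^ 2) ^ 3 ≤ (c2 * b ^ 2) ^ 3 := by
      have e : (a ^ 2) ^ 3 = (a ^ 3) ^ 2 := by ring
      rw [e, mul_pow, hc23]
      nlinarith [pow_pos hbpos 3, pow_pos hapos 3]
    exact le_of_pow_le_pow_left₀ (by norm_num) (by positivity) h6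
  have key : L * κ * a ≤ c2 * b ^ 2 := by
    calc L * κ * a ≤ a * a := mul_le_mul_of_nonneg_right hLκ hapos.le
      _ = a ^ 2 := by ring
      _ ≤ c2 * b ^ 2 := hab2
  rw [inv_div, inv_div, ← sub_div, div_le_iff₀ hκ]
  have eq1 : c2 * G ^ 2 / (3 * L * κ ^ 3) * (κ / a) * κ = c2 * G ^ 2 / (3 * L * κ * a) := by
    field_simp
  rw [eq1]
  calc a - b ≤ G ^ 2 / (3 * b ^ 2) := hdiff
    _ ≤ c2 * G ^ 2 / (3 * L * κ * a) := by
        rw [div_le_div_iff₀ (by positivity) (by positivity)]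
        nlinarith [mul_le_mul_of_nonneg_left key (by positivity : (0:ℝ) ≤ 3 * G ^ 2)]
end

section
/- Let $\sigma > 0$, $\bar\kappa > 0$, and for $t \geq 0$ let $w_t \geq 2\sigma^2$ be such that $w_t \leq w_{t-1}$, and define $\eta_t = \bar\kappa/(w_t + \sigma^2 t)^{1/3}$. If moreover $\eta_t \leq 1/L$ for some $L > 0$, then $\eta_t^{-1} - \eta_{t-1}^{-1} \leq \frac{2^{2/3} \sigma^2}{3 L \bar\kappa^3}\eta_t$ for all $t \geq 1$. -/
/-!
With `B t = w t + σ² t` we have `1/η t = B t^{1/3}/κ`. Monotonicity of `w` gives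
`B t ≤ B (t-1) + σ²`, so the tangent-line bound for the concave cube root yields
`B t^{1/3} - B (t-1)^{1/3} ≤ σ² / (3 B (t-1)^{2/3})`; since `w ≥ 2σ²` also `B t ≤ 2 B (t-1)`,
which trades `B (t-1)^{-2/3}` for `2^{2/3} B t^{-2/3} = 2^{2/3} η t² / κ²`. Finally `η t² ≤ η t / L`.
-/

namespace Real

theorem rpow_add_sub_rpow_le {x y p : ℝ} (hx : 0 < x) (hy : -x ≤ y) (hp0 : 0 ≤ p)
    (hp1 : p ≤ 1) : (x + y) ^ p - x ^ p ≤ p * x ^ (p - 1) * y := by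
  have hyx : -1 ≤ y / x := by rwa [le_div_iff₀ hx, neg_one_mul]
  calc (x + y) ^ p - x ^ p = x ^ p * (1 + y / x) ^ p - x ^ p := by
        rw [← mul_rpow hx.le (by linarith), mul_one_add, mul_div_cancel₀ y hx.ne']
    _ ≤ x ^ p * (1 + p * (y / x)) - x ^ p := by
        gcongr
        exact rpow_one_add_le_one_add_mul_self hyx hp0 hp1
    _ = p * x ^ (p - 1) * y := by
        rw [rpow_sub_one hx.ne']
        ring

theorem rpow_neg_le_mul_rpow_neg {a b c r : ℝ} (hb : 0 < b) (hc : 0 < c)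
    (hbca : b ≤ c * a) (hr : 0 ≤ r) : a ^ (-r) ≤ c ^ r * b ^ (-r) := by
  have ha : 0 < a := pos_of_mul_pos_right (hb.trans_le hbca) hc.le
  calc a ^ (-r) = c ^ r * (c * a) ^ (-r) := by
        rw [mul_rpow hc.le ha.le, ← mul_assoc, ← rpow_add hc, add_neg_cancel, rpow_zero, one_mul]
    _ ≤ c ^ r * b ^ (-r) := mul_le_mul_of_nonneg_left
        (rpow_le_rpow_of_nonpos hb hbca (neg_nonpos.2 hr)) (rpow_nonneg hc.le r)

theorem rpow_one_third_sub_le {a b s : ℝ} (ha : 0 < a) (hb : 0 < b) (hs : 0 ≤ s)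
    (hba : b ≤ a + s) (hb2a : b ≤ 2 * a) :
    b ^ (1 / 3 : ℝ) - a ^ (1 / 3 : ℝ) ≤ 2 ^ (2 / 3 : ℝ) * s / 3 * ((b ^ (1 / 3 : ℝ))⁻¹) ^ 2 := by
  have hb_inv_sq : ((b ^ (1 / 3 : ℝ))⁻¹) ^ 2 = b ^ (-(2 / 3) : ℝ) := by
    rw [inv_pow, ← rpow_mul_natCast hb.le, rpow_neg hb.le]
    norm_num
  have ha_pow : a ^ (1 / 3 - 1 : ℝ) ≤ 2 ^ (2 / 3 : ℝ) * b ^ (-(2 / 3) : ℝ) := by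
    rw [show (1 / 3 - 1 : ℝ) = -(2 / 3) by norm_num]
    exact rpow_neg_le_mul_rpow_neg hb two_pos hb2a (by norm_num)
  calc b ^ (1 / 3 : ℝ) - a ^ (1 / 3 : ℝ) = (a + (b - a)) ^ (1 / 3 : ℝ) - a ^ (1 / 3 : ℝ) := by
        rw [add_sub_cancel]
    _ ≤ 1 / 3 * a ^ (1 / 3 - 1 : ℝ) * (b - a) :=
        rpow_add_sub_rpow_le (p := 1 / 3) ha (by linarith) (by norm_num) (by norm_num)
    _ ≤ 1 / 3 * a ^ (1 / 3 - 1 : ℝ) * s := by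
        gcongr
        linarith
    _ ≤ 1 / 3 * (2 ^ (2 / 3 : ℝ) * b ^ (-(2 / 3) : ℝ)) * s := by
        gcongr
    _ = 2 ^ (2 / 3 : ℝ) * s / 3 * ((b ^ (1 / 3 : ℝ))⁻¹) ^ 2 := by
        rw [hb_inv_sq]
        ring

end Real

open Real

theorem stmt_18_general (σ κ L : ℝ) (hσ : 0 < σ) (hκ : 0 < κ)
    (w η : ℕ → ℝ) (hw : ∀ t, 2 * σ ^ 2 ≤ w t)
    (hwmono : ∀ t, 1 ≤ t → w t ≤ w (t - 1))
    (hη : ∀ t, η t = κ / (w t + σ ^ 2 * t) ^ ((1 : ℝ) / 3))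
    (hηL : ∀ t, η t ≤ 1 / L) :
    ∀ t, 1 ≤ t → (η t)⁻¹ - (η (t - 1))⁻¹ ≤ (2 : ℝ) ^ ((2 : ℝ) / 3) * σ ^ 2 / (3 * L * κ ^ 3) * η t := by
  intro t ht
  set B : ℕ → ℝ := fun t => w t + σ ^ 2 * t with hBdef
  have hηB : ∀ t, η t = κ / B t ^ (1 / 3 : ℝ) := hη
  have hB : ∀ t, 0 < B t := fun t =>
    add_pos_of_pos_of_nonneg (by nlinarith [hw t]) (by positivity)
  have hcast : ((t - 1 : ℕ) : ℝ) = t - 1 := by push_cast [ht]; ring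
  have hBstep : B t ≤ B (t - 1) + σ ^ 2 := by
    simp only [hBdef, hcast]
    linarith [hwmono t ht]
  have hσB : σ ^ 2 ≤ B (t - 1) := by
    have := mul_nonneg (sq_nonneg σ) (Nat.cast_nonneg (α := ℝ) (t - 1))
    simp only [hBdef]
    linarith [hw (t - 1), sq_nonneg σ]
  have hηt : 0 ≤ η t := by
    rw [hηB]
    exact div_nonneg hκ.le (rpow_nonneg (hB t).le _)
  calc (η t)⁻¹ - (η (t - 1))⁻¹ = (B t ^ (1 / 3 : ℝ) - B (t - 1) ^ (1 / 3 : ℝ)) / κ := by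
        rw [hηB, hηB, inv_div, inv_div, sub_div]
    _ ≤ 2 ^ (2 / 3 : ℝ) * σ ^ 2 / 3 * ((B t ^ (1 / 3 : ℝ))⁻¹) ^ 2 / κ := by
        gcongr
        exact rpow_one_third_sub_le (hB _) (hB t) (sq_nonneg σ) hBstep (by linarith)
    _ = 2 ^ (2 / 3 : ℝ) * σ ^ 2 / (3 * κ ^ 3) * (η t * η t) := by
        rw [hηB]
        field_simp
    _ ≤ 2 ^ (2 / 3 : ℝ) * σ ^ 2 / (3 * κ ^ 3) * (η t * (1 / L)) := by
        gcongr
        exact hηL t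
    _ = (2 : ℝ) ^ ((2 : ℝ) / 3) * σ ^ 2 / (3 * L * κ ^ 3) * η t := by
        field_simp

theorem stmt_18 (σ κ L : ℝ) (hσ : 0 < σ) (hκ : 0 < κ) (hL : 0 < L)
    (w η : ℕ → ℝ) (hw : ∀ t, 2 * σ ^ 2 ≤ w t)
    (hwmono : ∀ t, 1 ≤ t → w t ≤ w (t - 1))
    (hη : ∀ t, η t = κ / (w t + σ ^ 2 * t) ^ ((1 : ℝ) / 3))
    (hηL : ∀ t, η t ≤ 1 / L) :
    ∀ t, 1 ≤ t → (η t)⁻¹ - (η (t - 1))⁻¹ ≤ (2 : ℝ) ^ ((2 : ℝ) / 3) * σ ^ 2 / (3 * L * κ ^ 3) * η t :=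
  stmt_18_general σ κ L hσ hκ w η hw hwmono hη hηL
end
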